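/- Let γ > 0, Λ > 0, φ > 1, ψ ∈ (0, φ), and τ, τ' > 0 with τ' ≤ ψτ. Define ω = (φ − ψ)/(φΛ + ψγτ). Then φ(1 + γτ/Λ)/(φ + γτ'/Λ) ≥ 1 + ωγτ. -/
import Mathlib


theorem stmt_17 (γ Λ φ ψ τ τ' ω : ℝ)
    (hγ : 0 < γ) (hΛ : 0 < Λ) (hφ : 1 < φ) (hψ : 0 < ψ) (hψφ : ψ < φ)
    (hτ : 0 < τ) (hτ' : 0 < τ') (hτ'ψ : τ' ≤ ψ * τ)
    (hω : ω = (φ - ψ) / (φ * Λ + ψ * γ * τ)) :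
    φ * (1 + γ * τ / Λ) / (φ + γ * τ' / Λ) ≥ 1 + ω * γ * τ := by
  have hD : 0 < φ * Λ + ψ * γ * τ := by positivity
  have hB : 0 < φ + γ * τ' / Λ := by positivity
  rw [ge_iff_le, le_div_iff₀ hB, hω, div_mul_eq_mul_div, div_mul_eq_mul_div,
    ← sub_nonneg]
  have key : φ * (1 + γ * τ / Λ) - (1 + (φ - ψ) * γ * τ / (φ * Λ + ψ * γ * τ)) * (φ + γ * τ' / Λ)
      = (φ * (Λ + γ * τ) * (γ * (ψ * τ - τ'))) / (Λ * (φ * Λ + ψ * γ * τ)) := by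
    field_simp
    ring
  rw [key]
  have h1 : 0 ≤ ψ * τ - τ' := by linarith
  have h2 : 0 ≤ φ - ψ := by linarith
  positivity
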